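/- arXiv:1003.0425 — 2 statements merged into one kernel-verified Lean document; each statement's English description precedes it below -/
import Mathlib

section
/- (Example 8.3, unprovability part) The formula ⊓x p(x) → ∀x p(x), i.e. ⊔x ¬p(x) ∨ ∀x p(x), is not provable in CL12, where p is a unary nonlogical predicate letter. -/
namespace CL12

/-- Terms: variables, constants (named by natural numbers), and applications
of function letters (a function letter is a pair of a name and an arity). -/
inductive Term : Type
  | var : ℕ → Term
  | const : ℕ → Term
  | func : (f : ℕ) → (n : ℕ) → (Fin n → Term) → Term

/-- Replace every occurrence of the variable `x` by the term `t`. -/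
def Term.subst (x : ℕ) (t : Term) : Term → Term
  | .var y => if y = x then t else .var y
  | .const c => .const c
  | .func f n g => .func f n fun i => Term.subst x t (g i)

/-- The set of variables occurring in a term. -/
def Term.vars : Term → Finset ℕ
  | .var y => {y}
  | .const _ => ∅
  | .func _ n g => Finset.univ.biUnion fun i : Fin n => (g i).vars

/-- A classical first-order structure interpreting constants, function letters
and nonlogical predicate letters (identity is interpreted as actual identity). -/
structure Interp where
  U : Type
  hU : Nonempty U
  constI : ℕ → U
  funcI : (f n : ℕ) → (Fin n → U) → U
  predI : (p n : ℕ) → (Fin n → U) → Prop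

/-- Evaluation of terms under an interpretation and a valuation. -/
def Term.eval (I : Interp) (e : ℕ → I.U) : Term → I.U
  | .var y => e y
  | .const c => I.constI c
  | .func f n g => I.funcI f n fun i => (g i).eval I e

/-- Formulas of the language of CL12.  Negation is officially applied to atoms
only, so atoms come in a positive (`pos`, `eq`) and a negative (`neg`, `neq`)
form.  `and`/`or` are the parallel connectives ∧/∨, `cand`/`cor` the choice
connectives ⊓/⊔, `all`/`ex` the blind quantifiers ∀/∃ and `call`/`cex` the
choice quantifiers ⊓x/⊔x. -/
inductive Formula : Type
  | top : Formula
  | bot : Formula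
  | pos (p n : ℕ) (args : Fin n → Term) : Formula
  | neg (p n : ℕ) (args : Fin n → Term) : Formula
  | eq (t₁ t₂ : Term) : Formula
  | neq (t₁ t₂ : Term) : Formula
  | and (A B : Formula) : Formula
  | or (A B : Formula) : Formula
  | cand (A B : Formula) : Formula
  | cor (A B : Formula) : Formula
  | all (x : ℕ) (A : Formula) : Formula
  | ex (x : ℕ) (A : Formula) : Formula
  | call (x : ℕ) (A : Formula) : Formula
  | cex (x : ℕ) (A : Formula) : Formula

/-- Negation of an arbitrary formula, as an abbreviation via the De Morgan
dualities. -/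
def Formula.negation : Formula → Formula
  | .top => .bot
  | .bot => .top
  | .pos p n args => .neg p n args
  | .neg p n args => .pos p n args
  | .eq a b => .neq a b
  | .neq a b => .eq a b
  | .and A B => .or A.negation B.negation
  | .or A B => .and A.negation B.negation
  | .cand A B => .cor A.negation B.negation
  | .cor A B => .cand A.negation B.negation
  | .all x A => .ex x A.negation
  | .ex x A => .all x A.negation
  | .call x A => .cex x A.negation
  | .cex x A => .call x A.negation

/-- `E → F` abbreviates `¬E ∨ F`. -/
def Formula.impl (A B : Formula) : Formula := .or A.negation B

/-- Substitution of the term `t` for all free occurrences of the variable `x`. -/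
def Formula.subst (x : ℕ) (t : Term) : Formula → Formula
  | .top => .top
  | .bot => .bot
  | .pos p n args => .pos p n fun i => Term.subst x t (args i)
  | .neg p n args => .neg p n fun i => Term.subst x t (args i)
  | .eq a b => .eq (Term.subst x t a) (Term.subst x t b)
  | .neq a b => .neq (Term.subst x t a) (Term.subst x t b)
  | .and A B => .and (A.subst x t) (B.subst x t)
  | .or A B => .or (A.subst x t) (B.subst x t)
  | .cand A B => .cand (A.subst x t) (B.subst x t)
  | .cor A B => .cor (A.subst x t) (B.subst x t)
  | .all y A => if y = x then .all y A else .all y (A.subst x t)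
  | .ex y A => if y = x then .ex y A else .ex y (A.subst x t)
  | .call y A => if y = x then .call y A else .call y (A.subst x t)
  | .cex y A => if y = x then .cex y A else .cex y (A.subst x t)

/-- All variables occurring (free or bound) in a formula. -/
def Formula.vars : Formula → Finset ℕ
  | .top => ∅
  | .bot => ∅
  | .pos _ n args => Finset.univ.biUnion fun i : Fin n => (args i).vars
  | .neg _ n args => Finset.univ.biUnion fun i : Fin n => (args i).vars
  | .eq a b => a.vars ∪ b.vars
  | .neq a b => a.vars ∪ b.vars
  | .and A B => A.vars ∪ B.vars
  | .or A B => A.vars ∪ B.vars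
  | .cand A B => A.vars ∪ B.vars
  | .cor A B => A.vars ∪ B.vars
  | .all x A => insert x A.vars
  | .ex x A => insert x A.vars
  | .call x A => insert x A.vars
  | .cex x A => insert x A.vars

/-- Variables having a bound occurrence in a formula. -/
def Formula.boundVars : Formula → Finset ℕ
  | .top => ∅
  | .bot => ∅
  | .pos _ _ _ => ∅
  | .neg _ _ _ => ∅
  | .eq _ _ => ∅
  | .neq _ _ => ∅
  | .and A B => A.boundVars ∪ B.boundVars
  | .or A B => A.boundVars ∪ B.boundVars
  | .cand A B => A.boundVars ∪ B.boundVars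
  | .cor A B => A.boundVars ∪ B.boundVars
  | .all x A => insert x A.boundVars
  | .ex x A => insert x A.boundVars
  | .call x A => insert x A.boundVars
  | .cex x A => insert x A.boundVars

/-- A formula is elementary iff it contains no choice operators. -/
def Formula.IsElementary : Formula → Prop
  | .top => True
  | .bot => True
  | .pos _ _ _ => True
  | .neg _ _ _ => True
  | .eq _ _ => True
  | .neq _ _ => True
  | .and A B => A.IsElementary ∧ B.IsElementary
  | .or A B => A.IsElementary ∧ B.IsElementary
  | .cand _ _ => False
  | .cor _ _ => False
  | .all _ A => A.IsElementary
  | .ex _ A => A.IsElementary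
  | .call _ _ => False
  | .cex _ _ => False

/-- The elementarization ‖F‖ of a formula: all ⊔- and ⊔x-subformulas are
replaced by ⊥, and all ⊓- and ⊓x-subformulas by ⊤. -/
def Formula.elz : Formula → Formula
  | .top => .top
  | .bot => .bot
  | .pos p n args => .pos p n args
  | .neg p n args => .neg p n args
  | .eq a b => .eq a b
  | .neq a b => .neq a b
  | .and A B => .and A.elz B.elz
  | .or A B => .or A.elz B.elz
  | .cand _ _ => .top
  | .cor _ _ => .bot
  | .all x A => .all x A.elz
  | .ex x A => .ex x A.elz
  | .call _ _ => .top
  | .cex _ _ => .bot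

/-- Classical truth of a formula under an interpretation and a valuation
(identity is interpreted as actual identity; the choice operators, which never
occur in the elementary formulas this notion is applied to, are read as their
parallel/blind counterparts). -/
def Formula.truth (I : Interp) : (ℕ → I.U) → Formula → Prop
  | _, .top => True
  | _, .bot => False
  | e, .pos p n args => I.predI p n fun i => (args i).eval I e
  | e, .neg p n args => ¬ I.predI p n fun i => (args i).eval I e
  | e, .eq a b => a.eval I e = b.eval I e
  | e, .neq a b => a.eval I e ≠ b.eval I e
  | e, .and A B => A.truth I e ∧ B.truth I e
  | e, .or A B => A.truth I e ∨ B.truth I e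
  | e, .cand A B => A.truth I e ∧ B.truth I e
  | e, .cor A B => A.truth I e ∨ B.truth I e
  | e, .all x A => ∀ u : I.U, A.truth I (Function.update e x u)
  | e, .ex x A => ∃ u : I.U, A.truth I (Function.update e x u)
  | e, .call x A => ∀ u : I.U, A.truth I (Function.update e x u)
  | e, .cex x A => ∃ u : I.U, A.truth I (Function.update e x u)

/-- Classical validity; by Gödel's completeness theorem this is the same as
provability in classical first-order calculus with constants, function letters
and =, where = is the logical identity predicate. -/
def Valid (F : Formula) : Prop := ∀ (I : Interp) (e : ℕ → I.U), F.truth I e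

/-- The winner of the empty run of the game `F*` on valuation `e`: the
proposition that the empty run is ⊤-won.  Atoms are resolved by truth, the
empty run of `A ⊓ B` and `⊓x A` is ⊤-won, the empty run of `A ⊔ B` and `⊔x A`
is ⊥-won. -/
def Formula.wn0 (I : Interp) : (ℕ → I.U) → Formula → Prop
  | _, .top => True
  | _, .bot => False
  | e, .pos p n args => I.predI p n fun i => (args i).eval I e
  | e, .neg p n args => ¬ I.predI p n fun i => (args i).eval I e
  | e, .eq a b => a.eval I e = b.eval I e
  | e, .neq a b => a.eval I e ≠ b.eval I e
  | e, .and A B => A.wn0 I e ∧ B.wn0 I e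
  | e, .or A B => A.wn0 I e ∨ B.wn0 I e
  | _, .cand _ _ => True
  | _, .cor _ _ => False
  | e, .all x A => ∀ u : I.U, A.wn0 I (Function.update e x u)
  | e, .ex x A => ∃ u : I.U, A.wn0 I (Function.update e x u)
  | _, .call _ _ => True
  | _, .cex _ _ => False

/-- A sequent E₁,…,Eₙ ⊸ F. -/
structure Sequent where
  ant : List Formula
  suc : Formula

/-- The conjunction E₁ ∧ … ∧ Eₙ of a list of formulas (⊤ when the list is empty). -/
def listAnd : List Formula → Formula
  | [] => .top
  | [A] => A
  | A :: l => .and A (listAnd l)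

/-- The elementarization ‖E₁‖∧…∧‖Eₙ‖ → ‖F‖ of a sequent. -/
def Sequent.elz (S : Sequent) : Formula :=
  (listAnd (S.ant.map Formula.elz)).impl S.suc.elz

/-- A sequent is stable iff its elementarization is classically valid
(equivalently, provable in classical first-order calculus with constants,
function letters and =). -/
def Stable (S : Sequent) : Prop := Valid S.elz

/-- All variables occurring in a sequent. -/
def Sequent.vars (S : Sequent) : Finset ℕ :=
  S.ant.foldr (fun A acc => A.vars ∪ acc) S.suc.vars

/-- Variables having a bound occurrence in a sequent. -/
def Sequent.boundVars (S : Sequent) : Finset ℕ :=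
  S.ant.foldr (fun A acc => A.boundVars ∪ acc) S.suc.boundVars

/-- The winner of the empty run of a sequent E₁,…,Eₙ ⊸ F: it is ⊤-won iff the
empty run of some Eᵢ is ⊥-won or the empty run of F is ⊤-won. -/
def Sequent.wn0 (S : Sequent) (I : Interp) (e : ℕ → I.U) : Prop :=
  (∃ E ∈ S.ant, ¬ E.wn0 I e) ∨ S.suc.wn0 I e

/-- A context: a formula with a single hole which is a surface position, i.e.,
not in the scope of any choice operator.  `C.fill H` is the formula `F[H]`
having the indicated surface occurrence of `H`. -/
inductive Ctx : Type
  | hole : Ctx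
  | andL (C : Ctx) (B : Formula) : Ctx
  | andR (A : Formula) (C : Ctx) : Ctx
  | orL (C : Ctx) (B : Formula) : Ctx
  | orR (A : Formula) (C : Ctx) : Ctx
  | all (x : ℕ) (C : Ctx) : Ctx
  | ex (x : ℕ) (C : Ctx) : Ctx

/-- Filling the hole of a context with a formula. -/
def Ctx.fill : Ctx → Formula → Formula
  | .hole, H => H
  | .andL C B, H => .and (C.fill H) B
  | .andR A C, H => .and A (C.fill H)
  | .orL C B, H => .or (C.fill H) B
  | .orR A C, H => .or A (C.fill H)
  | .all x C, H => .all x (C.fill H)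
  | .ex x C, H => .ex x (C.fill H)

/-- The hole of the context is not in the scope of ∧. -/
def Ctx.noAnd : Ctx → Prop
  | .hole => True
  | .andL _ _ => False
  | .andR _ _ => False
  | .orL C _ => C.noAnd
  | .orR _ C => C.noAnd
  | .all _ C => C.noAnd
  | .ex _ C => C.noAnd

/-- The hole of the context is not in the scope of ∨. -/
def Ctx.noOr : Ctx → Prop
  | .hole => True
  | .andL C _ => C.noOr
  | .andR _ C => C.noOr
  | .orL _ _ => False
  | .orR _ _ => False
  | .all _ C => C.noOr
  | .ex _ C => C.noOr

/-- In the ⊔x-Choose and ⊓x-Choose rules, the term chosen for `x` must be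
either a constant, or a variable with no bound occurrences in the premise. -/
def GoodTerm (t : Term) (premise : Sequent) : Prop :=
  (∃ c, t = Term.const c) ∨ (∃ y, t = Term.var y ∧ y ∉ premise.boundVars)

/-- CL12-provability, defined by the six rules ⊔-Choose, ⊓-Choose, ⊔x-Choose,
⊓x-Choose, Replicate and Wait.  In the Wait rule, the predicate `P` carves out
the set of premises Y₁,…,Yₙ of the rule, all of which are required to be
provable. -/
inductive Provable : Sequent → Prop
  | corChoose (Γ : List Formula) (C : Ctx) (H0 H1 : Formula) (i : Bool) :
      Provable ⟨Γ, C.fill (bif i then H1 else H0)⟩ →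
      Provable ⟨Γ, C.fill (.cor H0 H1)⟩
  | candChoose (Γ Δ : List Formula) (C : Ctx) (H0 H1 F : Formula) (i : Bool) :
      Provable ⟨Γ ++ C.fill (bif i then H1 else H0) :: Δ, F⟩ →
      Provable ⟨Γ ++ C.fill (.cand H0 H1) :: Δ, F⟩
  | cexChoose (Γ : List Formula) (C : Ctx) (x : ℕ) (H : Formula) (t : Term) :
      GoodTerm t ⟨Γ, C.fill (H.subst x t)⟩ →
      Provable ⟨Γ, C.fill (H.subst x t)⟩ →
      Provable ⟨Γ, C.fill (.cex x H)⟩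
  | callChoose (Γ Δ : List Formula) (C : Ctx) (x : ℕ) (H F : Formula) (t : Term) :
      GoodTerm t ⟨Γ ++ C.fill (H.subst x t) :: Δ, F⟩ →
      Provable ⟨Γ ++ C.fill (H.subst x t) :: Δ, F⟩ →
      Provable ⟨Γ ++ C.fill (.call x H) :: Δ, F⟩
  | replicate (Γ Δ : List Formula) (E F : Formula) :
      Provable ⟨Γ ++ E :: Δ ++ [E], F⟩ →
      Provable ⟨Γ ++ E :: Δ, F⟩
  | wait (X : Sequent) (P : Sequent → Prop)
      (hstable : Stable X)
      (hcand : ∀ (C : Ctx) (H0 H1 : Formula), X.suc = C.fill (.cand H0 H1) →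
          P ⟨X.ant, C.fill H0⟩ ∧ P ⟨X.ant, C.fill H1⟩)
      (hcor : ∀ (Γ Δ : List Formula) (C : Ctx) (H0 H1 : Formula),
          X.ant = Γ ++ C.fill (.cor H0 H1) :: Δ →
          P ⟨Γ ++ C.fill H0 :: Δ, X.suc⟩ ∧ P ⟨Γ ++ C.fill H1 :: Δ, X.suc⟩)
      (hcall : ∀ (C : Ctx) (x : ℕ) (H : Formula), X.suc = C.fill (.call x H) →
          ∃ y, y ∉ X.vars ∧ P ⟨X.ant, C.fill (H.subst x (.var y))⟩)
      (hcex : ∀ (Γ Δ : List Formula) (C : Ctx) (x : ℕ) (H : Formula),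
          X.ant = Γ ++ C.fill (.cex x H) :: Δ →
          ∃ y, y ∉ X.vars ∧ P ⟨Γ ++ C.fill (H.subst x (.var y)) :: Δ, X.suc⟩)
      (hprov : ∀ Y, P Y → Provable Y) :
      Provable X


/-!
A CL12-proof of a sequent with empty antecedent must end with ⊔-Choose, ⊔x-Choose or Wait.
Wait needs `⊥ ∨ ∀x p(x)` to be valid, the only available ⊔x-Choose step leads to the elementary
sequent `¬p(t) ∨ ∀x p(x)`, which again can only be obtained by Wait, and ⊔-Choose has nothing to
act on. Both elementarizations fail in the two-element model where `p` holds only of the value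
`true` that every term takes.
-/

theorem Ctx.isElementary_of_fill : ∀ {C : Ctx} {G : Formula},
    (C.fill G).IsElementary → G.IsElementary
  | .hole, _, h => h
  | .andL C _, _, h => C.isElementary_of_fill h.1
  | .andR _ C, _, h => C.isElementary_of_fill h.2
  | .orL C _, _, h => C.isElementary_of_fill h.1
  | .orR _ C, _, h => C.isElementary_of_fill h.2
  | .all _ C, _, h => C.isElementary_of_fill h
  | .ex _ C, _, h => C.isElementary_of_fill h

theorem Ctx.fill_eq_or_cex {C : Ctx} {G H B : Formula} {x : ℕ} (hB : B.IsElementary)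
    (h : C.fill G = .or (.cex x H) B) :
    (C = .hole ∧ G = .or (.cex x H) B) ∨ (C = .orL .hole B ∧ G = .cex x H) ∨
      G.IsElementary := by
  cases C with
  | hole => exact .inl ⟨rfl, h⟩
  | orL C B' =>
    obtain ⟨hC, rfl⟩ := Formula.or.inj h
    cases C <;> simp_all [Ctx.fill]
  | orR A C =>
    obtain ⟨-, rfl⟩ := Formula.or.inj h
    exact .inr (.inr (isElementary_of_fill hB))
  | andL | andR | all | ex => simp [Ctx.fill] at h

theorem Provable.stable_of_isElementary {F : Formula} (h : Provable ⟨[], F⟩)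
    (hF : F.IsElementary) : Stable ⟨[], F⟩ := by
  generalize hS : (⟨[], F⟩ : Sequent) = S at h
  cases h with
  | corChoose _ C _ _ _ _ | cexChoose _ C _ _ _ _ _ =>
    cases hS
    exact (Ctx.isElementary_of_fill hF).elim
  | candChoose | callChoose | replicate => simp [Sequent.mk.injEq] at hS
  | wait _ _ hstable => exact hS ▸ hstable

theorem Provable.stable_or_exists_of_or_cex {x : ℕ} {H B : Formula}
    (h : Provable ⟨[], .or (.cex x H) B⟩) (hB : B.IsElementary) :
    Stable ⟨[], .or (.cex x H) B⟩ ∨ ∃ t, Provable ⟨[], .or (H.subst x t) B⟩ := by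
  generalize hS : (⟨[], .or (.cex x H) B⟩ : Sequent) = S at h
  cases h with
  | corChoose _ C _ _ _ _ =>
    obtain ⟨-, hfill⟩ := Sequent.mk.inj hS
    rcases Ctx.fill_eq_or_cex hB hfill.symm with ⟨-, h⟩ | ⟨-, h⟩ | h <;> cases h
  | cexChoose _ C y H' t _ hp =>
    obtain ⟨rfl, hfill⟩ := Sequent.mk.inj hS
    rcases Ctx.fill_eq_or_cex hB hfill.symm with ⟨-, h⟩ | ⟨rfl, h⟩ | h <;> cases h
    exact .inr ⟨t, hp⟩
  | candChoose | callChoose | replicate => simp [Sequent.mk.injEq] at hS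
  | wait _ _ hstable => exact .inl (hS ▸ hstable)

theorem stable_nil_iff {F : Formula} :
    Stable ⟨[], F⟩ ↔ ∀ (I : Interp) (e : ℕ → I.U), F.elz.truth I e := by
  simp [Stable, Valid, Sequent.elz, listAnd, Formula.impl, Formula.negation, Formula.truth]

def boolModel : Interp where
  U := Bool
  hU := ⟨true⟩
  constI _ := true
  funcI _ _ _ := true
  predI _ _ a := ∀ i, a i = true

theorem Term.eval_boolModel (t : Term) : t.eval boolModel (fun _ => true) = true := by
  cases t <;> rfl

theorem not_truth_boolModel_all (p x : ℕ) (e : ℕ → Bool) :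
    ¬ (Formula.all x (.pos p 1 ![Term.var x])).truth boolModel e := fun h => by
  simpa [Formula.truth, boolModel, Term.eval] using h false

theorem not_truth_boolModel_neg (p n : ℕ) (args : Fin n → Term) :
    ¬ (Formula.neg p n args).truth boolModel (fun _ => true) := fun h =>
  h fun i => (args i).eval_boolModel

/-- Example 8.3, unprovability part: ⊓x p(x) → ∀x p(x), i.e.
⊔x ¬p(x) ∨ ∀x p(x), is not provable in CL12, where p is a unary nonlogical
predicate letter. -/
theorem example_8_3_unprovable :
    ¬ Provable ⟨[],
      Formula.impl (.call 0 (.pos 0 1 ![Term.var 0]))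
        (.all 0 (.pos 0 1 ![Term.var 0]))⟩ := by
  intro h
  rcases h.stable_or_exists_of_or_cex trivial with hst | ⟨t, ht⟩
  · exact (stable_nil_iff.1 hst boolModel fun _ => true).elim id
      (not_truth_boolModel_all 0 0 _)
  · have hst := ht.stable_of_isElementary ⟨trivial, trivial⟩
    exact (stable_nil_iff.1 hst boolModel fun _ => true).elim
      (not_truth_boolModel_neg 0 1 _) (not_truth_boolModel_all 0 0 _)

end CL12
end

section
/- (Exercise 8.6, unprovability part) The formula p⊓q → (p⊓q)∧(p⊓q) is not provable in CL12, where p and q are 0-ary nonlogical predicate letters, even though this formula has the form F→F∧F of a classical tautology. -/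
namespace CL12

/-! The environment wins the game against every strategy: it answers `p` in the left conjunct
`p ⊓ q` and `q` in the right one, so the consequent becomes `p ∧ q`; whichever of `¬p`, `¬q` the
machine picks in the antecedent, the resulting elementary sequent `⊸ ¬p ∨ (p ∧ q)` or
`⊸ ¬q ∨ (p ∧ q)` is false in a model where only one of `p`, `q` holds. Proof-theoretically, every
rule concluding a sequent reached along this play has a premise of the same kind, and once both
conjuncts are resolved such a sequent is not stable, so no branch of a proof can ever close. -/

/-- Formulas through whose main connective no surface context descends. -/
def Formula.IsSurfaceLeaf : Formula → Prop
  | .and _ _ | .or _ _ | .all _ _ | .ex _ _ => False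
  | _ => True

theorem Ctx.eq_hole_of_fill_eq {C : Ctx} {H T : Formula} (hT : T.IsSurfaceLeaf)
    (h : C.fill H = T) : C = .hole ∧ H = T := by
  cases C <;> subst h <;> first | exact ⟨rfl, rfl⟩ | exact absurd hT id

theorem Ctx.fill_eq_or_and {C : Ctx} {H L A B : Formula} (hH : H.IsSurfaceLeaf)
    (hL : L.IsSurfaceLeaf) (hA : A.IsSurfaceLeaf) (hB : B.IsSurfaceLeaf)
    (h : C.fill H = .or L (.and A B)) :
    (C = .orL .hole (.and A B) ∧ H = L) ∨ (C = .orR L (.andL .hole B) ∧ H = A) ∨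
      (C = .orR L (.andR A .hole) ∧ H = B) := by
  rcases C with _ | _ | _ | ⟨C, _⟩ | ⟨_, C⟩ | _ | _ <;>
    simp only [Ctx.fill, Formula.or.injEq, reduceCtorEq] at h
  · subst h; exact absurd hH id
  · obtain ⟨hC, rfl⟩ := h
    obtain ⟨rfl, rfl⟩ := eq_hole_of_fill_eq hL hC
    exact .inl ⟨rfl, rfl⟩
  · obtain ⟨rfl, hC⟩ := h
    rcases C with _ | ⟨C, _⟩ | ⟨_, C⟩ | _ | _ | _ | _ <;>
      simp only [Ctx.fill, Formula.and.injEq, reduceCtorEq] at hC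
    · subst hC; exact absurd hH id
    · obtain ⟨hC, rfl⟩ := hC
      obtain ⟨rfl, rfl⟩ := eq_hole_of_fill_eq hA hC
      exact .inr (.inl ⟨rfl, rfl⟩)
    · obtain ⟨rfl, hC⟩ := hC
      obtain ⟨rfl, rfl⟩ := eq_hole_of_fill_eq hB hC
      exact .inr (.inr ⟨rfl, rfl⟩)

def atomP : Formula := .pos 0 0 ![]

def atomQ : Formula := .pos 1 0 ![]

/-- The states of the disjunct `¬(p ⊓ q) = ¬p ⊔ ¬q` as the machine plays in it. -/
inductive NegState : Formula → Prop
  | unresolved : NegState (.cor (.neg 0 0 ![]) (.neg 1 0 ![]))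
  | negP : NegState (.neg 0 0 ![])
  | negQ : NegState (.neg 1 0 ![])

/-- The states of a conjunct `p ⊓ q` in which the environment is going to choose `r`. -/
inductive ConjState (r : Formula) : Formula → Prop
  | unresolved : ConjState r (.cand atomP atomQ)
  | resolved : ConjState r r

theorem NegState.isSurfaceLeaf {L : Formula} (hL : NegState L) : L.IsSurfaceLeaf := by
  cases hL <;> trivial

theorem ConjState.isSurfaceLeaf {r A : Formula} (hr : r.IsSurfaceLeaf) (hA : ConjState r A) :
    A.IsSurfaceLeaf := by
  cases hA
  · trivial
  · exact hr

/-- The sequents reached when the environment follows its winning strategy. -/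
def Lost (S : Sequent) : Prop :=
  S.ant = [] ∧ ∃ L A B, S.suc = .or L (.and A B) ∧
    NegState L ∧ ConjState atomP A ∧ ConjState atomQ B

theorem Lost.fill_eq {Γ : List Formula} {C : Ctx} {H : Formula} (hH : H.IsSurfaceLeaf)
    (h : Lost ⟨Γ, C.fill H⟩) :
    ∃ L A B, NegState L ∧ ConjState atomP A ∧ ConjState atomQ B ∧
      ((C = .orL .hole (.and A B) ∧ H = L) ∨ (C = .orR L (.andL .hole B) ∧ H = A) ∨
        (C = .orR L (.andR A .hole) ∧ H = B)) := by
  obtain ⟨-, L, A, B, hsuc, hL, hA, hB⟩ := h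
  exact ⟨L, A, B, hL, hA, hB, Ctx.fill_eq_or_and hH hL.isSurfaceLeaf
    (hA.isSurfaceLeaf (by trivial)) (hB.isSurfaceLeaf (by trivial)) hsuc⟩

theorem Lost.of_corChoose {Γ : List Formula} {C : Ctx} {H0 H1 : Formula}
    (h : Lost ⟨Γ, C.fill (.cor H0 H1)⟩) (i : Bool) :
    Lost ⟨Γ, C.fill (bif i then H1 else H0)⟩ := by
  obtain ⟨L, A, B, hL, hA, hB, ⟨rfl, rfl⟩ | ⟨-, rfl⟩ | ⟨-, rfl⟩⟩ := h.fill_eq (by trivial)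
  · cases hL
    refine ⟨h.1, _, A, B, rfl, ?_, hA, hB⟩
    cases i
    · exact .negP
    · exact .negQ
  · cases hA
  · cases hB

theorem not_lost_cexChoose {Γ : List Formula} {C : Ctx} {x : ℕ} {H : Formula} :
    ¬ Lost ⟨Γ, C.fill (.cex x H)⟩ := fun h => by
  obtain ⟨L, A, B, hL, hA, hB, ⟨-, rfl⟩ | ⟨-, rfl⟩ | ⟨-, rfl⟩⟩ := h.fill_eq (by trivial)
  · cases hL
  · cases hA
  · cases hB

def atomInterp (s : Set ℕ) : Interp where
  U := Unit
  hU := ⟨()⟩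
  constI _ := ()
  funcI _ _ _ := ()
  predI p _ _ := p ∈ s

theorem not_stable_or_and_atoms {L : Formula} (hL : NegState L) :
    ¬ Stable ⟨[], .or L (.and atomP atomQ)⟩ := by
  obtain ⟨s, hLs, hs⟩ : ∃ s : Set ℕ,
      ¬ L.elz.truth (atomInterp s) (fun _ => ()) ∧ (0 ∉ s ∨ 1 ∉ s) := by
    cases hL
    · exact ⟨{0}, id, by simp⟩
    · exact ⟨{0}, by simp [Formula.elz, Formula.truth, atomInterp], by simp⟩
    · exact ⟨{1}, by simp [Formula.elz, Formula.truth, atomInterp], by simp⟩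
  intro h
  have := h (atomInterp s) fun _ => ()
  simp only [Sequent.elz, listAnd, List.map_nil, Formula.impl, Formula.negation, Formula.elz,
    Formula.truth, atomP, atomQ, false_or] at this
  exact this.elim hLs fun hpq => hs.elim (· hpq.1) (· hpq.2)

theorem Lost.exists_waitPremise {X : Sequent} {P : Sequent → Prop} (h : Lost X)
    (hstable : Stable X)
    (hcand : ∀ (C : Ctx) (H0 H1 : Formula), X.suc = C.fill (.cand H0 H1) →
      P ⟨X.ant, C.fill H0⟩ ∧ P ⟨X.ant, C.fill H1⟩) :
    ∃ Y, P Y ∧ Lost Y := by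
  obtain ⟨hant, L, A, B, hsuc, hL, hA, hB⟩ := h
  rcases hA with _ | _
  · exact ⟨_, (hcand (.orR L (.andL .hole B)) _ _ hsuc).1, hant, L, _, B, rfl, hL, .resolved, hB⟩
  rcases hB with _ | _
  · exact ⟨_, (hcand (.orR L (.andR atomP .hole)) _ _ hsuc).2, hant, L, _, _, rfl, hL,
      .resolved, .resolved⟩
  obtain ⟨ant, suc⟩ := X
  subst hant hsuc
  exact absurd hstable (not_stable_or_and_atoms hL)

theorem Provable.not_lost {S : Sequent} (h : Provable S) : ¬ Lost S := by
  induction h with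
  | corChoose _ _ _ _ _ _ ih => exact fun hS => ih (hS.of_corChoose _)
  | cexChoose => exact not_lost_cexChoose
  | candChoose | callChoose | replicate => exact fun hS => by simpa using hS.1
  | wait X P hstable hcand _ _ _ _ ih =>
    intro hX
    obtain ⟨Y, hY, hLost⟩ := hX.exists_waitPremise hstable hcand
    exact ih Y hY hLost

/-- Exercise 8.6, unprovability part: p⊓q → (p⊓q)∧(p⊓q) is not provable in
CL12, where p and q are 0-ary nonlogical predicate letters. -/
theorem exercise_8_6_unprovable :
    ¬ Provable ⟨[],
      Formula.impl (.cand (.pos 0 0 ![]) (.pos 1 0 ![]))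
        (.and (.cand (.pos 0 0 ![]) (.pos 1 0 ![]))
          (.cand (.pos 0 0 ![]) (.pos 1 0 ![])))⟩ := fun h =>
  h.not_lost ⟨rfl, _, _, _, rfl, .unresolved, .unresolved, .unresolved⟩

end CL12
end
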